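/- arXiv:1509.01180 — 2 statements merged into one kernel-verified Lean document; each statement's English description precedes it below -/
import Mathlib

section
/- In the upper half-plane ℍ, the Green's function G_ℍ(z, w) = (1/(2π)) log |(z − w̄)/(z − w)| satisfies: for every z ∈ ℍ and every ε with 0 < ε < Im(z), ∫_ℝ G_ℍ(z, x + iε) dx = ε. -/
/-!
With `z = a + b i`, the integrand is
`(log ((x - a)² + (b + ε)²) - log ((x - a)² + (b - ε)²)) / 4π`.
After translating by `a`, the integral `∫ log ((x² + p²) / (x² + q²)) dx = 2π (p - q)` is read
off the primitive `x log (x² + p²) - 2x + 2p arctan (x / p)` of `log (x² + p²)`: by evenness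
it is twice the integral over `x > 0`; the primitives vanish at `0`, their `x log` terms cancel at
infinity since `x log (1 + c / x²) → 0`, and `2p arctan (x / p) → p π`.
-/

open Complex Filter Set Topology MeasureTheory

noncomputable def logSqAddSqPrimitive (p x : ℝ) : ℝ :=
  x * Real.log (x ^ 2 + p ^ 2) - 2 * x + 2 * p * Real.arctan (x / p)

@[simp]
theorem logSqAddSqPrimitive_zero (p : ℝ) : logSqAddSqPrimitive p 0 = 0 := by
  simp [logSqAddSqPrimitive]

theorem hasDerivAt_logSqAddSqPrimitive {p : ℝ} (hp : p ≠ 0) (x : ℝ) :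
    HasDerivAt (logSqAddSqPrimitive p) (Real.log (x ^ 2 + p ^ 2)) x := by
  have hpos : 0 < x ^ 2 + p ^ 2 := by positivity
  have hlog : HasDerivAt (fun x ↦ Real.log (x ^ 2 + p ^ 2)) (2 * x / (x ^ 2 + p ^ 2)) x := by
    simpa using ((hasDerivAt_pow 2 x).add_const (p ^ 2)).log hpos.ne'
  have harctan := (Real.hasDerivAt_arctan (x / p)).comp x ((hasDerivAt_id x).div_const p)
  refine ((((hasDerivAt_id x).mul hlog).sub ((hasDerivAt_id x).const_mul 2)).add
    (harctan.const_mul (2 * p))).congr_deriv ?_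
  simp only [id]
  field_simp
  ring

theorem tendsto_mul_log_sq_add_sq_sub_atTop (p q : ℝ) :
    Tendsto (fun x ↦ x * (Real.log (x ^ 2 + p ^ 2) - Real.log (x ^ 2 + q ^ 2))) atTop (𝓝 0) := by
  wlog hsq : q ^ 2 ≤ p ^ 2 generalizing p q
  · convert (this q p (le_of_not_ge hsq)).neg using 2 <;> ring
  refine squeeze_zero' ?_ ?_ ((tendsto_const_nhds (x := p ^ 2 - q ^ 2)).div_atTop tendsto_id)
  · filter_upwards [eventually_gt_atTop 0] with x hx
    exact mul_nonneg hx.le (sub_nonneg.mpr (Real.log_le_log (by positivity) (by linarith)))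
  · filter_upwards [eventually_gt_atTop 0] with x hx
    have hq : 0 < x ^ 2 + q ^ 2 := by positivity
    have hlog : Real.log (x ^ 2 + p ^ 2) - Real.log (x ^ 2 + q ^ 2) ≤
        (p ^ 2 - q ^ 2) / (x ^ 2 + q ^ 2) := by
      rw [← Real.log_div (by positivity) hq.ne']
      refine (Real.log_le_sub_one_of_pos (by positivity)).trans_eq ?_
      field_simp
      ring
    calc x * (Real.log (x ^ 2 + p ^ 2) - Real.log (x ^ 2 + q ^ 2))
        ≤ x * ((p ^ 2 - q ^ 2) / (x ^ 2 + q ^ 2)) := mul_le_mul_of_nonneg_left hlog hx.le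
      _ ≤ (p ^ 2 - q ^ 2) / x := by
        rw [mul_div_assoc', div_le_div_iff₀ hq hx]
        nlinarith [mul_nonneg (sub_nonneg.mpr hsq) (sq_nonneg q)]

theorem tendsto_logSqAddSqPrimitive_sub_atTop {p q : ℝ} (hp : 0 < p) (hq : 0 < q) :
    Tendsto (fun x ↦ logSqAddSqPrimitive p x - logSqAddSqPrimitive q x) atTop
      (𝓝 (Real.pi * (p - q))) := by
  have harctan {r : ℝ} (hr : 0 < r) :
      Tendsto (fun x ↦ Real.arctan (x / r)) atTop (𝓝 (Real.pi / 2)) :=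
    (tendsto_nhds_of_tendsto_nhdsWithin Real.tendsto_arctan_atTop).comp
      (tendsto_id.atTop_div_const hr)
  have hlim := (tendsto_mul_log_sq_add_sq_sub_atTop p q).add
    (((harctan hp).const_mul (2 * p)).sub ((harctan hq).const_mul (2 * q)))
  convert hlim using 2
  · simp only [logSqAddSqPrimitive]
    ring
  · ring

theorem integral_log_sq_add_sq_sub_log_sq_add_sq {p q : ℝ} (hp : 0 < p) (hq : 0 < q) :
    ∫ x : ℝ, (Real.log (x ^ 2 + p ^ 2) - Real.log (x ^ 2 + q ^ 2)) = 2 * Real.pi * (p - q) := by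
  wlog hqp : q ≤ p generalizing p q
  · simp_rw [← neg_sub (Real.log (_ ^ 2 + q ^ 2)), integral_neg, this hq hp (le_of_not_ge hqp)]
    ring
  have hIoi := integral_Ioi_of_hasDerivAt_of_nonneg' (a := 0)
    (fun x _ ↦ (hasDerivAt_logSqAddSqPrimitive hp.ne' x).sub
      (hasDerivAt_logSqAddSqPrimitive hq.ne' x))
    (fun x _ ↦ sub_nonneg.mpr (Real.log_le_log (by positivity) (by gcongr)))
    (tendsto_logSqAddSqPrimitive_sub_atTop hp hq)
  have heven :=
    integral_comp_abs (f := fun x ↦ Real.log (x ^ 2 + p ^ 2) - Real.log (x ^ 2 + q ^ 2))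
  simp only [sq_abs] at heven
  rw [heven, hIoi, Pi.sub_apply, logSqAddSqPrimitive_zero, logSqAddSqPrimitive_zero]
  ring

theorem log_norm_sub_div_sub (z : ℂ) (x y : ℝ) (h₁ : z.im + y ≠ 0) (h₂ : z.im - y ≠ 0) :
    Real.log ‖(z - (x - y * I)) / (z - (x + y * I))‖ =
      (Real.log ((z.re - x) ^ 2 + (z.im + y) ^ 2) -
        Real.log ((z.re - x) ^ 2 + (z.im - y) ^ 2)) / 2 := by
  have hu : z - (x - y * I) = ((z.re - x : ℝ) : ℂ) + ((z.im + y : ℝ) : ℂ) * I := by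
    apply Complex.ext <;> simp
  have hv : z - (x + y * I) = ((z.re - x : ℝ) : ℂ) + ((z.im - y : ℝ) : ℂ) * I := by
    apply Complex.ext <;> simp
  rw [norm_div, hu, hv, norm_add_mul_I, norm_add_mul_I,
    Real.log_div (by positivity) (by positivity), Real.log_sqrt (by positivity),
    Real.log_sqrt (by positivity)]
  ring

/-- For the Green's function of the upper half-plane,
`∫_ℝ G_ℍ(z, x + iε) dx = ε` whenever `0 < ε < Im z`. -/
theorem integral_halfPlane_green_eq (z : ℂ) (ε : ℝ) (hε : 0 < ε) (hεz : ε < z.im) :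
    ∫ x : ℝ,
      (1 / (2 * Real.pi)) *
        Real.log (‖(z - ((x : ℂ) - ε * Complex.I)) /
          (z - ((x : ℂ) + ε * Complex.I))‖) = ε := by
  have hp : 0 < z.im + ε := by linarith
  have hq : 0 < z.im - ε := by linarith
  simp_rw [log_norm_sub_div_sub z _ ε hp.ne' hq.ne', integral_const_mul, integral_div,
    integral_sub_left_eq_self
      (fun x ↦ Real.log (x ^ 2 + (z.im + ε) ^ 2) - Real.log (x ^ 2 + (z.im - ε) ^ 2)),
    integral_log_sq_add_sq_sub_log_sq_add_sq hp hq]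
  field_simp
  ring
end

section
/- Let φ : ℝ → ℂ be a characteristic function of a real random variable that is nonvanishing on a dense subset D of ℝ. If X, Y, Z are real random variables with Y, Z each independent of X, and X + Y has the same distribution as X + Z, and additionally the characteristic function of X is nonzero on D, then Y and Z have the same distribution, provided the characteristic functions of Y and Z are continuous (which they always are). -/
open MeasureTheory ProbabilityTheory

noncomputable def charFunOf (μ : Measure ℝ) (t : ℝ) : ℂ :=
  ∫ x, Complex.exp (↑(t * x) * Complex.I) ∂μ

lemma charFunOf_eq_charFun (μ : Measure ℝ) : charFunOf μ = charFun μ := by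
  ext t
  simp only [charFunOf, charFun_apply_real, Complex.ofReal_mul]

section Cancellation

variable {E : Type*} [NormedAddCommGroup E] [InnerProductSpace ℝ E] [CompleteSpace E]
  [MeasurableSpace E] [BorelSpace E] [SecondCountableTopology E]

/-- Characteristic functions are continuous, so the cancellation `φ_μ φ_ν₁ = φ_μ φ_ν₂` on the
dense set where `φ_μ ≠ 0` already gives `φ_ν₁ = φ_ν₂` everywhere. -/
theorem Measure.conv_left_cancel_of_charFun_ne_zero_on_dense {μ ν₁ ν₂ : Measure E}
    [IsFiniteMeasure μ] [IsFiniteMeasure ν₁] [IsFiniteMeasure ν₂] (h : μ ∗ ν₁ = μ ∗ ν₂)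
    {D : Set E} (hD : Dense D) (hne : ∀ t ∈ D, charFun μ t ≠ 0) : ν₁ = ν₂ := by
  refine Measure.ext_of_charFun <| continuous_charFun.ext_on hD continuous_charFun fun t ht ↦ ?_
  have hprod : charFun μ t * charFun ν₁ t = charFun μ t * charFun ν₂ t := by
    rw [← charFun_conv, ← charFun_conv, h]
  exact mul_left_cancel₀ (hne t ht) hprod

end Cancellation

/-- Cancellation of an independent summand whose characteristic function does not vanish on
a dense set: if `X + Y =ᵈ X' + Z` with `Y ⊥ X`, `Z ⊥ X'`, `X =ᵈ X'` and the characteristic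
function of `X` is nonzero on a dense set, then `Y =ᵈ Z`. -/
theorem eq_distrib_of_add_indep_charFun_ne_zero
    {Ω Ω' : Type*} [MeasurableSpace Ω] [MeasurableSpace Ω']
    (P : Measure Ω) [IsProbabilityMeasure P] (P' : Measure Ω') [IsProbabilityMeasure P']
    (X Y : Ω → ℝ) (X' Z : Ω' → ℝ)
    (hX : Measurable X) (hY : Measurable Y) (hX' : Measurable X') (hZ : Measurable Z)
    (hXX' : Measure.map X P = Measure.map X' P')
    (hXYindep : IndepFun X Y P) (hXZindep : IndepFun X' Z P')
    (hsum : Measure.map (fun ω => X ω + Y ω) P = Measure.map (fun ω => X' ω + Z ω) P')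
    (D : Set ℝ) (hD : Dense D)
    (hne : ∀ t ∈ D, charFunOf (Measure.map X P) t ≠ 0) :
    Measure.map Y P = Measure.map Z P' := by
  have := Measure.isProbabilityMeasure_map (μ := P) hX.aemeasurable
  have := Measure.isProbabilityMeasure_map (μ := P) hY.aemeasurable
  have := Measure.isProbabilityMeasure_map (μ := P') hZ.aemeasurable
  have hconv : P.map X ∗ P.map Y = P.map X ∗ P'.map Z := by
    rw [← hXYindep.map_add_eq_map_conv_map₀ hX.aemeasurable hY.aemeasurable, hXX',
      ← hXZindep.map_add_eq_map_conv_map₀ hX'.aemeasurable hZ.aemeasurable]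
    exact hsum
  refine Measure.conv_left_cancel_of_charFun_ne_zero_on_dense hconv hD fun t ht ↦ ?_
  rw [← charFunOf_eq_charFun]
  exact hne t ht
end
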